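/- arXiv:2208.10202 — 2 statements merged into one kernel-verified Lean document; each statement's English description precedes it below -/
import Mathlib

section
/- Abelian property for fixed toppling stacks: fix M ≥ 1, a function x : (ℤ×ℤ) × ℕ → ℤ with 1 ≤ x(v,i) for all v and i (the amount sent to each neighbour at the i-th toppling of v), and a configuration c : ℤ×ℤ → ℤ. Call a finite list S of vertices a legal stacked stabilising sequence from c if, processing S in order and toppling a vertex v for its i-th occurrence with amount x(v,i), every toppled vertex has value at least 4M at the moment it topples, and the resulting configuration has all values strictly below 4M. Then any two legal stacked stabilising sequences S and S' from c contain every vertex v the same number of times (the occurrence count of v in S equals that in S'), and they produce the same final configuration. -/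
/-- Configurations: finitely supported functions on `ℤ × ℤ` with integer values. -/
abbrev Config := (ℤ × ℤ) →₀ ℤ

/-- The four neighbours of a vertex `v = (x, y)` in `ℤ × ℤ`. -/
def nbrs (v : ℤ × ℤ) : Finset (ℤ × ℤ) :=
  {(v.1 + 1, v.2), (v.1 - 1, v.2), (v.1, v.2 + 1), (v.1, v.2 - 1)}

/-- The amount-`k` toppling at `v`: `c − 4k·𝟙_v + k·Σ_{w∼v} 𝟙_w`. -/
noncomputable def topp (k : ℤ) (v : ℤ × ℤ) (c : Config) : Config :=
  c - Finsupp.single v (4 * k) + ∑ w ∈ nbrs v, Finsupp.single w k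


/-- `S` is a legal stacked toppling sequence from `c` with toppling counts `cnt`:
processing `S` in order, a vertex `v` toppling for its `i`-th occurrence uses amount
`x(v, i)`, and every toppled vertex has value at least `4M` at the moment it topples. -/
def stackedLegal (M : ℕ) (x : (ℤ × ℤ) × ℕ → ℤ) :
    List (ℤ × ℤ) → Config → ((ℤ × ℤ) → ℕ) → Prop
  | [], _, _ => True
  | v :: S, c, cnt =>
      (4 * M : ℤ) ≤ c v ∧
        stackedLegal M x S (topp (x (v, cnt v)) v c) (Function.update cnt v (cnt v + 1))

/-- The configuration obtained by processing the list `S` in order, toppling a vertex `v`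
for its `i`-th occurrence with amount `x(v, i)`. -/
noncomputable def stackedRun (x : (ℤ × ℤ) × ℕ → ℤ) :
    List (ℤ × ℤ) → Config → ((ℤ × ℤ) → ℕ) → Config
  | [], c, _ => c
  | v :: S, c, cnt => stackedRun x S (topp (x (v, cnt v)) v c) (Function.update cnt v (cnt v + 1))

/-- `c` is stable for threshold `T`: every vertex has value `< T`. -/
def stable (T : ℤ) (c : Config) : Prop := ∀ v, c v < T

/-!
Topplings at different vertices commute, and the `i`-th toppling of `v` uses the amount
`x(v, i)` however the topplings of other vertices are interleaved with it; hence the final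
configuration depends only on the multiset of toppled vertices. Since amounts are
nonnegative, toppling other vertices never lowers the value at `v`, so an unstable vertex
stays unstable until it is toppled. Thus every legal sequence can be matched, vertex by
vertex, inside any legal stabilising sequence (a least action principle), and two legal
stabilising sequences are permutations of each other.
-/

theorem topp_comm (k m : ℤ) (v w : ℤ × ℤ) (c : Config) :
    topp k v (topp m w c) = topp m w (topp k v c) := by
  simp only [topp]
  abel

theorem le_topp_apply_of_ne {k : ℤ} (hk : 0 ≤ k) {v w : ℤ × ℤ} (h : v ≠ w) (c : Config) :
    c w ≤ topp k v c w := by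
  have hsend : 0 ≤ (∑ u ∈ nbrs v, Finsupp.single u k) w := by
    rw [Finsupp.finsetSum_apply]
    exact Finset.sum_nonneg fun u _ => by
      rw [Finsupp.single_apply]
      split_ifs <;> simp [hk]
  simp only [topp, Finsupp.add_apply, Finsupp.sub_apply, Finsupp.single_eq_of_ne' h]
  linarith

section Stacked

variable {x : (ℤ × ℤ) × ℕ → ℤ}

theorem stackedRun_cons (v : ℤ × ℤ) (S : List (ℤ × ℤ)) (c : Config) (cnt : (ℤ × ℤ) → ℕ) :
    stackedRun x (v :: S) c cnt =
      stackedRun x S (topp (x (v, cnt v)) v c) (Function.update cnt v (cnt v + 1)) :=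
  rfl

theorem stackedRun_swap {a b : ℤ × ℤ} (S : List (ℤ × ℤ)) (c : Config) (cnt : (ℤ × ℤ) → ℕ) :
    stackedRun x (b :: a :: S) c cnt = stackedRun x (a :: b :: S) c cnt := by
  by_cases hab : a = b
  · rw [hab]
  · simp only [stackedRun_cons, Function.update_of_ne hab, Function.update_of_ne (Ne.symm hab),
      topp_comm, Function.update_comm (Ne.symm hab)]

theorem List.Perm.stackedRun_eq {S S' : List (ℤ × ℤ)} (h : S.Perm S') (c : Config)
    (cnt : (ℤ × ℤ) → ℕ) : stackedRun x S c cnt = stackedRun x S' c cnt := by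
  induction h generalizing c cnt with
  | nil => rfl
  | cons a _ ih => exact ih _ _
  | swap a b S => exact stackedRun_swap S c cnt
  | trans _ _ ih₁ ih₂ => rw [ih₁, ih₂]

variable (hx : ∀ v i, 0 ≤ x (v, i))
include hx

theorem le_stackedRun_apply_of_notMem {v : ℤ × ℤ} {S : List (ℤ × ℤ)} (hv : v ∉ S)
    (c : Config) (cnt : (ℤ × ℤ) → ℕ) : c v ≤ stackedRun x S c cnt v := by
  induction S generalizing c cnt with
  | nil => exact le_rfl
  | cons u S ih =>
    have hu : u ≠ v := fun h => hv (h ▸ List.mem_cons_self)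
    calc c v ≤ topp (x (u, cnt u)) u c v := le_topp_apply_of_ne (hx _ _) hu c
      _ ≤ _ := ih (fun h => hv (List.mem_cons_of_mem _ h)) _ _

/-- Moving `v` to the front keeps it unstable (the topplings in `A` only add to `c v`) and keeps
its amount `x (v, cnt v)`, since `v ∉ A` leaves its counter untouched. -/
theorem stackedLegal_cons_of_append_cons {M : ℕ} {v : ℤ × ℤ} {A B : List (ℤ × ℤ)}
    (hvA : v ∉ A) {c : Config} {cnt : (ℤ × ℤ) → ℕ} (hv : (4 * M : ℤ) ≤ c v)
    (h : stackedLegal M x (A ++ v :: B) c cnt) : stackedLegal M x (v :: (A ++ B)) c cnt := by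
  induction A generalizing c cnt with
  | nil => exact h
  | cons a A ih =>
    obtain ⟨ha, hrest⟩ := h
    have hav : a ≠ v := fun h => hvA (h ▸ List.mem_cons_self)
    obtain ⟨-, hrest'⟩ := ih (fun h => hvA (List.mem_cons_of_mem _ h))
      (hv.trans (le_topp_apply_of_ne (hx _ _) hav c)) hrest
    refine ⟨hv, ha.trans (le_topp_apply_of_ne (hx _ _) (Ne.symm hav) c), ?_⟩
    rw [Function.update_of_ne hav]
    rwa [Function.update_of_ne (Ne.symm hav), topp_comm, Function.update_comm hav] at hrest'

theorem subperm_of_stackedLegal {M : ℕ} {L S : List (ℤ × ℤ)} {c : Config}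
    {cnt : (ℤ × ℤ) → ℕ} (hL : stackedLegal M x L c cnt) (hS : stackedLegal M x S c cnt)
    (hstab : stable (4 * M) (stackedRun x S c cnt)) : L.Subperm S := by
  induction L generalizing S c cnt with
  | nil => exact List.nil_subperm
  | cons u L ih =>
    obtain ⟨hu, hL⟩ := hL
    have huS : u ∈ S := by
      by_contra h
      exact (hstab u).not_ge (hu.trans (le_stackedRun_apply_of_notMem hx h c cnt))
    obtain ⟨A, B, rfl, huA⟩ := List.eq_append_cons_of_mem huS
    have hmiddle : (A ++ u :: B).Perm (u :: (A ++ B)) := List.perm_middle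
    obtain ⟨-, hAB⟩ := stackedLegal_cons_of_append_cons hx huA hu hS
    rw [hmiddle.stackedRun_eq, stackedRun_cons] at hstab
    exact ((List.subperm_cons u).mpr (ih hL hAB hstab)).trans hmiddle.symm.subperm

end Stacked

theorem abelian_stacked_general (M : ℕ) (x : (ℤ × ℤ) × ℕ → ℤ)
    (hx : ∀ v i, 1 ≤ x (v, i)) (c : Config) (S S' : List (ℤ × ℤ))
    (hS : stackedLegal M x S c (fun _ => 0))
    (hS' : stackedLegal M x S' c (fun _ => 0))
    (hSstab : stable (4 * M) (stackedRun x S c (fun _ => 0)))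
    (hS'stab : stable (4 * M) (stackedRun x S' c (fun _ => 0))) :
    (∀ v, S.count v = S'.count v) ∧
      stackedRun x S c (fun _ => 0) = stackedRun x S' c (fun _ => 0) := by
  have hx₀ : ∀ v i, 0 ≤ x (v, i) := fun v i => zero_le_one.trans (hx v i)
  have hperm : S.Perm S' :=
    (subperm_of_stackedLegal hx₀ hS hS' hS'stab).antisymm
      (subperm_of_stackedLegal hx₀ hS' hS hSstab)
  exact ⟨hperm.count_eq, hperm.stackedRun_eq c _⟩

/-- Abelian property for fixed toppling stacks: any two legal stacked stabilising
sequences from `c` contain every vertex the same number of times, and produce the same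
final configuration. -/
theorem abelian_stacked (M : ℕ) (hM : 1 ≤ M) (x : (ℤ × ℤ) × ℕ → ℤ)
    (hx : ∀ v i, 1 ≤ x (v, i)) (c : Config) (S S' : List (ℤ × ℤ))
    (hS : stackedLegal M x S c (fun _ => 0))
    (hS' : stackedLegal M x S' c (fun _ => 0))
    (hSstab : stable (4 * M) (stackedRun x S c (fun _ => 0)))
    (hS'stab : stable (4 * M) (stackedRun x S' c (fun _ => 0))) :
    (∀ v, S.count v = S'.count v) ∧
      stackedRun x S c (fun _ => 0) = stackedRun x S' c (fun _ => 0) :=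
  abelian_stacked_general M x hx c S S' hS hS' hSstab hS'stab
end

section
/- Least action principle for the amount-k deterministic model: fix M ≥ 1, k ≥ 1, a configuration c : ℤ×ℤ → ℤ, and a finitely supported function u : ℤ×ℤ → ℕ such that for every vertex v, c(v) − 4k·u(v) + k·Σ_{w∼v} u(w) < 4M (i.e. toppling each vertex v exactly u(v) times with amount k stabilises c for threshold 4M). Then every legal toppling sequence S (amount k, threshold 4M) from c topples each vertex v at most u(v) times: the occurrence count of v in S is at most u(v) for every v. -/
/-- `S` is a legal toppling sequence (amount `k`, threshold `T`) from `c`: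
each toppled vertex is unstable at the time it topples. -/
def legal (k T : ℤ) : List (ℤ × ℤ) → Config → Prop
  | [], _ => True
  | v :: S, c => T ≤ c v ∧ legal k T S (topp k v c)


lemma mem_nbrs_comm {v w : ℤ × ℤ} : w ∈ nbrs v ↔ v ∈ nbrs w := by
  simp only [nbrs, Finset.mem_insert, Finset.mem_singleton, Prod.ext_iff]
  omega

lemma topp_apply (k : ℤ) (v w : ℤ × ℤ) (c : Config) :
    topp k v c w = c w - (if v = w then 4 * k else 0) + (if w ∈ nbrs v then k else 0) := by
  simp only [topp, Finsupp.add_apply, Finsupp.sub_apply, Finsupp.finsetSum_apply,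
    Finsupp.single_apply, Finset.sum_ite_eq']

/-- The value at `v` of the configuration obtained from `c` by toppling every vertex `w`
exactly `u w` times with amount `k`. -/
def toppleBy (k : ℤ) (c : Config) (u : (ℤ × ℤ) →₀ ℕ) (v : ℤ × ℤ) : ℤ :=
  c v - 4 * k * u v + k * ∑ w ∈ nbrs v, (u w : ℤ)

lemma toppleBy_topp (k : ℤ) (v : ℤ × ℤ) (c : Config) (u : (ℤ × ℤ) →₀ ℕ) (x : ℤ × ℤ) :
    toppleBy k (topp k v c) u x = toppleBy k c (u + Finsupp.single v 1 : (ℤ × ℤ) →₀ ℕ) x := by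
  have hsum : ∑ w ∈ nbrs x, ((u + Finsupp.single v 1 : (ℤ × ℤ) →₀ ℕ) w : ℤ)
      = ∑ w ∈ nbrs x, (u w : ℤ) + if v ∈ nbrs x then 1 else 0 := by
    simp only [Finsupp.add_apply, Finsupp.single_apply, Nat.cast_add, Finset.sum_add_distrib,
      Nat.cast_ite, Nat.cast_one, Nat.cast_zero, Finset.sum_ite_eq]
  rw [toppleBy, toppleBy, topp_apply, hsum, Finsupp.add_apply, Finsupp.single_apply]
  simp only [mem_nbrs_comm (v := v)]
  split_ifs <;> push_cast <;> ring

lemma pos_of_le_of_toppleBy_lt {k T : ℤ} (hk : 0 ≤ k) {c : Config} {u : (ℤ × ℤ) →₀ ℕ}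
    {v : ℤ × ℤ} (hc : T ≤ c v) (hu : toppleBy k c u v < T) : 0 < u v := by
  by_contra! h
  have hsum : 0 ≤ k * ∑ w ∈ nbrs v, (u w : ℤ) := by positivity
  simp only [toppleBy, Nat.le_zero.mp h] at hu
  omega

theorem count_le_of_legal {k T : ℤ} (hk : 0 ≤ k) :
    ∀ (S : List (ℤ × ℤ)) (c : Config) (u : (ℤ × ℤ) →₀ ℕ),
      (∀ v, toppleBy k c u v < T) → legal k T S c → ∀ v, S.count v ≤ u v
  | [], _, _, _, _, _ => by simp
  | v :: S, c, u, hu, ⟨hcv, hS⟩, w => by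
    obtain ⟨u', rfl⟩ : ∃ u', u = u' + Finsupp.single v 1 := by
      rw [← le_iff_exists_add', Finsupp.single_le_iff]
      exact pos_of_le_of_toppleBy_lt hk hcv (hu v)
    have ih := count_le_of_legal hk S (topp k v c) u'
      (fun x => (toppleBy_topp k v c u' x).symm ▸ hu x) hS w
    rw [List.count_cons, Finsupp.add_apply, Finsupp.single_apply]
    split_ifs <;> simp_all

theorem least_action_general (M k : ℕ)
    (c : Config) (u : (ℤ × ℤ) →₀ ℕ)
    (hu : ∀ v : ℤ × ℤ,
      c v - 4 * (k : ℤ) * (u v : ℤ) + (k : ℤ) * ∑ w ∈ nbrs v, (u w : ℤ) < 4 * M)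
    (S : List (ℤ × ℤ)) (hS : legal (k : ℤ) (4 * M) S c) :
    ∀ v : ℤ × ℤ, S.count v ≤ u v :=
  count_le_of_legal (Int.natCast_nonneg k) S c u hu hS

/-- Least action principle for the amount-`k` deterministic model: if toppling each
vertex `v` exactly `u(v)` times with amount `k` stabilises `c` for threshold `4M`, then
every legal toppling sequence (amount `k`, threshold `4M`) from `c` topples each
vertex `v` at most `u(v)` times. -/
theorem least_action (M k : ℕ) (hM : 1 ≤ M) (hk : 1 ≤ k)
    (c : Config) (u : (ℤ × ℤ) →₀ ℕ)
    (hu : ∀ v : ℤ × ℤ,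
      c v - 4 * (k : ℤ) * (u v : ℤ) + (k : ℤ) * ∑ w ∈ nbrs v, (u w : ℤ) < 4 * M)
    (S : List (ℤ × ℤ)) (hS : legal (k : ℤ) (4 * M) S c) :
    ∀ v : ℤ × ℤ, S.count v ≤ u v :=
  least_action_general M k c u hu S hS
end
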